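/- Let E_top = {{T'_1,T'_2},{T'_2,T'_3},{T'_3,T'_4},{T'_4,T'_1}} and E_bot = {{T_5,T_6},{T_6,T_7},{T_7,T_8},{T_8,T_5}}. The subsets A of E_top ∪ E_bot in which every one of the eight points T'_1,…,T'_4,T_5,…,T_8 lies on an even number of edges of A are exactly the four subsets ∅, E_top, E_bot and E_top ∪ E_bot, and under the componentwise action of G' these four subsets fall into exactly 3 orbits, namely {∅}, {E_top, E_bot} and {E_top ∪ E_bot}. (The orbit of E_top ∪ E_bot corresponds to the monohedral tiling FB𝒪 and the other two nontrivial data give the 2 dihedral f-tilings derived from FB𝒪 by a-edge assignments.) -/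

import Mathlib

open Matrix

attribute [local instance] Classical.propDecidable

/-- `τ = (2√2+1)/7`. -/
noncomputable def tau : ℝ := (2 * Real.sqrt 2 + 1) / 7

/-- The eight points `T'_1, T'_2, T'_3, T'_4, T_5, T_6, T_7, T_8` (indexed by
`Fin 8`; indices `0,…,3` are the top points `T'_k`, indices `4,…,7` are the bottom
points `T_k`). -/
noncomputable def P8 : Fin 8 → Fin 3 → ℝ :=
  ![tau • ![Real.sqrt 2, 0, 1], tau • ![0, Real.sqrt 2, 1],
    tau • ![-Real.sqrt 2, 0, 1], tau • ![0, -Real.sqrt 2, 1],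
    tau • ![1, 1, -1], tau • ![-1, 1, -1], tau • ![-1, -1, -1], tau • ![1, -1, -1]]

/-- The top square edges. -/
def Etop : Finset (Sym2 (Fin 8)) := {s(0, 1), s(1, 2), s(2, 3), s(3, 0)}

/-- The bottom square edges. -/
def Ebot : Finset (Sym2 (Fin 8)) := {s(4, 5), s(5, 6), s(6, 7), s(7, 4)}

/-- Every one of the eight points lies on an even number of edges of `A`. -/
noncomputable def EvenIncidence (A : Finset (Sym2 (Fin 8))) : Prop :=
  ∀ i : Fin 8, Even (A.filter fun e => i ∈ e).card

/-- The matrix `σ'₂` with rows `(1/√2, 1/√2, 0), (−1/√2, 1/√2, 0), (0, 0, −1)`. -/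
noncomputable def sigma2' : Matrix (Fin 3) (Fin 3) ℝ :=
  !![1 / Real.sqrt 2, 1 / Real.sqrt 2, 0;
     -(1 / Real.sqrt 2), 1 / Real.sqrt 2, 0;
     0, 0, -1]

/-- The matrix `σ' = diag(1, −1, 1)`. -/
def sigma' : Matrix (Fin 3) (Fin 3) ℝ := !![1, 0, 0; 0, -1, 0; 0, 0, 1]

/-- `G'`: the subgroup of `GL(3,ℝ)` generated by `σ'₂` and `σ'`. -/
noncomputable def G' : Subgroup (GL (Fin 3) ℝ) :=
  Subgroup.closure {g | (↑g : Matrix (Fin 3) (Fin 3) ℝ) = sigma2' ∨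
    (↑g : Matrix (Fin 3) (Fin 3) ℝ) = sigma'}

/-- `A'` is the image of the edge set `A` under the componentwise action of `u`. -/
noncomputable def edgeAct (u : GL (Fin 3) ℝ) (A A' : Finset (Sym2 (Fin 8))) : Prop :=
  ∀ e' : Sym2 (Fin 8), e' ∈ A' ↔
    ∃ e ∈ A, ∃ i j i' j' : Fin 8, e = s(i, j) ∧ e' = s(i', j') ∧
      (↑u : Matrix (Fin 3) (Fin 3) ℝ).mulVec (P8 i) = P8 i' ∧
      (↑u : Matrix (Fin 3) (Fin 3) ℝ).mulVec (P8 j) = P8 j'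

/-!
Every point lies on exactly two of the eight square edges, the edges to its two neighbours on its
square, so an even-incidence subset contains both or neither of them; going around a square, it
contains all or none of that square's edges.

`P8` is injective (already the sign patterns of its coordinates are distinct), so any matrix acts
on edge sets through a map of the eight points and cannot enlarge them. This separates
all the candidate orbits except `Etop` and `Ebot`, which `σ'₂` exchanges.
-/

open Finset

lemma even_card_filter_iff {α : Type*} [DecidableEq α] {A : Finset α} {p : α → Prop}
    [DecidablePred p] {a b : α} (hab : a ≠ b) (hp : ∀ e ∈ A, p e ↔ e = a ∨ e = b) :
    Even (A.filter p).card ↔ (a ∈ A ↔ b ∈ A) := by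
  have hfilter : A.filter p = ({a, b} : Finset α).filter (· ∈ A) := by
    ext e
    simp only [mem_filter, mem_insert, mem_singleton]
    constructor
    · rintro ⟨he, hpe⟩
      exact ⟨(hp e he).1 hpe, he⟩
    · rintro ⟨hab', he⟩
      exact ⟨he, (hp e he).2 hab'⟩
  rw [hfilter]
  by_cases ha : a ∈ A <;> by_cases hb : b ∈ A <;>
    simp [filter_insert, filter_singleton, ha, hb, hab]

def squareSucc : Fin 8 → Fin 8 := ![1, 2, 3, 0, 5, 6, 7, 4]

def squarePred : Fin 8 → Fin 8 := ![3, 0, 1, 2, 7, 4, 5, 6]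

def squareEdge (i : Fin 8) : Sym2 (Fin 8) := s(i, squareSucc i)

lemma squareEdge_injective : Function.Injective squareEdge := by decide

lemma Etop_eq_image : Etop = ({0, 1, 2, 3} : Finset (Fin 8)).image squareEdge := by decide

lemma Ebot_eq_image : Ebot = ({4, 5, 6, 7} : Finset (Fin 8)).image squareEdge := by decide

lemma Etop_union_Ebot_eq_image : Etop ∪ Ebot = univ.image squareEdge := by decide

lemma mem_iff_eq_squareEdge_pred_or_eq_squareEdge :
    ∀ e ∈ Etop ∪ Ebot, ∀ i, i ∈ e ↔ e = squareEdge (squarePred i) ∨ e = squareEdge i := by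
  decide

lemma squareEdge_pred_ne (i : Fin 8) : squareEdge (squarePred i) ≠ squareEdge i := by
  revert i; decide

lemma evenIncidence_iff_of_subset {A : Finset (Sym2 (Fin 8))} (hA : A ⊆ Etop ∪ Ebot) :
    EvenIncidence A ↔ ∀ i, (squareEdge (squarePred i) ∈ A ↔ squareEdge i ∈ A) :=
  forall_congr' fun i => even_card_filter_iff (squareEdge_pred_ne i)
    fun e he => mem_iff_eq_squareEdge_pred_or_eq_squareEdge e (hA he) i

set_option maxRecDepth 10000 in
lemma squarePred_invariant_iff (S : Finset (Fin 8)) :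
    (∀ i, (squarePred i ∈ S ↔ i ∈ S)) ↔
      S = ∅ ∨ S = {0, 1, 2, 3} ∨ S = {4, 5, 6, 7} ∨ S = univ := by
  revert S; decide

lemma evenIncidence_iff {A : Finset (Sym2 (Fin 8))} (hA : A ⊆ Etop ∪ Ebot) :
    EvenIncidence A ↔ A = ∅ ∨ A = Etop ∨ A = Ebot ∨ A = Etop ∪ Ebot := by
  set S := univ.filter fun i => squareEdge i ∈ A
  have hAS : A = S.image squareEdge := by
    ext e
    constructor
    · intro he
      obtain ⟨i, -, rfl⟩ := mem_image.1 (Etop_union_Ebot_eq_image ▸ hA he)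
      exact mem_image_of_mem _ (mem_filter.2 ⟨mem_univ i, he⟩)
    · intro he
      obtain ⟨i, hi, rfl⟩ := mem_image.1 he
      exact (mem_filter.1 hi).2
  have himage := image_injective squareEdge_injective
  rw [evenIncidence_iff_of_subset hA, Etop_union_Ebot_eq_image, Etop_eq_image, Ebot_eq_image,
    hAS, ← image_empty squareEdge, himage.eq_iff, himage.eq_iff, himage.eq_iff, himage.eq_iff,
    ← squarePred_invariant_iff]
  simp only [squareEdge_injective.mem_finset_image]

lemma tau_pos : 0 < tau := by unfold tau; positivity

def P8SignPattern : Fin 8 → Fin 3 → SignType :=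
  ![![1, 0, 1], ![0, 1, 1], ![-1, 0, 1], ![0, -1, 1],
    ![1, 1, -1], ![-1, 1, -1], ![-1, -1, -1], ![1, -1, -1]]

lemma sign_P8 (i : Fin 8) (j : Fin 3) : SignType.sign (P8 i j) = P8SignPattern i j := by
  fin_cases i <;> fin_cases j <;> simp [P8, P8SignPattern, tau_pos]

lemma P8_injective : Function.Injective P8 := by
  have hpattern : Function.Injective P8SignPattern := by decide
  intro i j h
  exact hpattern (funext fun k => by rw [← sign_P8, ← sign_P8, h])

lemma exists_forall_mulVec_P8_eq (M : Matrix (Fin 3) (Fin 3) ℝ) :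
    ∃ π : Fin 8 → Fin 8, ∀ i i', M *ᵥ P8 i = P8 i' → π i = i' := by
  have hfiber : ∀ i, ∃ k, ∀ i', M *ᵥ P8 i = P8 i' → k = i' := by
    intro i
    by_cases h : ∃ i', M *ᵥ P8 i = P8 i'
    · obtain ⟨k, hk⟩ := h
      exact ⟨k, fun i' hi' => P8_injective (hk.symm.trans hi')⟩
    · exact ⟨i, fun i' hi' => absurd ⟨i', hi'⟩ h⟩
  choose π hπ using hfiber
  exact ⟨π, hπ⟩

lemma edgeAct.card_le {u : GL (Fin 3) ℝ} {A A' : Finset (Sym2 (Fin 8))}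
    (h : edgeAct u A A') : A'.card ≤ A.card := by
  obtain ⟨π, hπ⟩ := exists_forall_mulVec_P8_eq (u : Matrix (Fin 3) (Fin 3) ℝ)
  have hsub : A' ⊆ A.image (Sym2.map π) := by
    intro e' he'
    obtain ⟨e, he, i, j, i', j', rfl, rfl, hi, hj⟩ := (h e').1 he'
    exact mem_image.2 ⟨_, he, by rw [Sym2.map_mk, hπ _ _ hi, hπ _ _ hj]⟩
  exact (card_le_card hsub).trans card_image_le

lemma edgeAct_image_map {u : GL (Fin 3) ℝ} {π : Fin 8 → Fin 8}
    (hu : ∀ i, (u : Matrix (Fin 3) (Fin 3) ℝ) *ᵥ P8 i = P8 (π i)) (A : Finset (Sym2 (Fin 8))) :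
    edgeAct u A (A.image (Sym2.map π)) := by
  intro e'
  rw [mem_image]
  constructor
  · rintro ⟨e, he, rfl⟩
    induction e using Sym2.ind with
    | h i j => exact ⟨s(i, j), he, i, j, π i, π j, rfl, rfl, hu i, hu j⟩
  · rintro ⟨e, he, i, j, i', j', rfl, rfl, hi, hj⟩
    refine ⟨s(i, j), he, ?_⟩
    rw [Sym2.map_mk, P8_injective ((hu i).symm.trans hi),
      P8_injective ((hu j).symm.trans hj)]

lemma det_sigma2' : sigma2'.det = -1 := by
  have h2 : Real.sqrt 2 ^ 2 = 2 := Real.sq_sqrt (by norm_num)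
  simp only [sigma2', det_fin_three, of_apply, cons_val', cons_val_zero, cons_val_fin_one,
    cons_val_one, Matrix.cons_val, one_div, mul_neg, mul_one, mul_zero, sub_zero, neg_neg, add_zero,
    zero_mul, neg_zero]
  field_simp
  linarith

lemma sigma2'_mem_G' :
    Matrix.GeneralLinearGroup.mkOfDetNeZero sigma2' (by simp [det_sigma2']) ∈ G' :=
  Subgroup.subset_closure (Or.inl rfl)

def sigma2'Perm : Fin 8 → Fin 8 := ![7, 4, 5, 6, 0, 1, 2, 3]

lemma sigma2'_mulVec_P8 (i : Fin 8) : sigma2' *ᵥ P8 i = P8 (sigma2'Perm i) := by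
  have h2 : Real.sqrt 2 ^ 2 = 2 := Real.sq_sqrt (by norm_num)
  ext j
  fin_cases i <;> fin_cases j <;>
    simp [P8, sigma2', sigma2'Perm, mulVec, dotProduct, Fin.sum_univ_three] <;>
    field_simp <;> rw [h2] <;> ring

lemma Etop_image_sigma2'Perm : Etop.image (Sym2.map sigma2'Perm) = Ebot := by decide

/-- The subsets of the eight square edges in which every point lies on an even number
of edges are exactly `∅`, `Etop`, `Ebot` and `Etop ∪ Ebot`, and under the action of
`G'` these fall into exactly `3` orbits, namely `{∅}`, `{Etop, Ebot}` and
`{Etop ∪ Ebot}`. -/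
theorem stmt_14 :
    (∀ A ⊆ Etop ∪ Ebot, (EvenIncidence A ↔
      A = ∅ ∨ A = Etop ∨ A = Ebot ∨ A = Etop ∪ Ebot)) ∧
    (∃ u ∈ G', edgeAct u Etop Ebot) ∧
    (¬ ∃ u ∈ G', edgeAct u ∅ Etop) ∧
    (¬ ∃ u ∈ G', edgeAct u ∅ Ebot) ∧
    (¬ ∃ u ∈ G', edgeAct u ∅ (Etop ∪ Ebot)) ∧
    (¬ ∃ u ∈ G', edgeAct u Etop (Etop ∪ Ebot)) ∧
    (¬ ∃ u ∈ G', edgeAct u Ebot (Etop ∪ Ebot)) := by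
  have hcard {A A' : Finset (Sym2 (Fin 8))} (hlt : A.card < A'.card) :
      ¬ ∃ u ∈ G', edgeAct u A A' :=
    fun ⟨_, _, h⟩ => hlt.not_ge h.card_le
  refine ⟨fun A hA => evenIncidence_iff hA, ⟨_, sigma2'_mem_G', ?_⟩,
    hcard (by decide), hcard (by decide), hcard (by decide), hcard (by decide), hcard (by decide)⟩
  rw [← Etop_image_sigma2'Perm]
  exact edgeAct_image_map sigma2'_mulVec_P8 Etop
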